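/- arXiv:2408.09974 — 2 statements merged into one kernel-verified Lean document; each statement's English description precedes it below -/
import Mathlib

section
/- Let Q1, Q2, d1, d2 be real numbers satisfying 0 ≤ d2 − d1 and d2 − d1 ≤ 2·(Q1 − Q2). Then the total softmax probability of the suboptimal action a2 is at most the extrinsic softmax probability of the optimal action a1: exp(Q2 + d2) / (exp(Q1 + d1) + exp(Q2 + d2)) ≤ exp(Q1) / (exp(Q1) + exp(Q2)). -/
open Real

lemma Real.exp_div_exp_add_exp (a b : ℝ) : exp a / (exp a + exp b) = sigmoid (a - b) := by
  rw [sigmoid_def, neg_sub, exp_sub]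
  field_simp

theorem total_prob_a2_le_ext_prob_a1_general (Q1 Q2 d1 d2 : ℝ)
    (h1 : d2 - d1 ≤ 2 * (Q1 - Q2)) :
    Real.exp (Q2 + d2) / (Real.exp (Q1 + d1) + Real.exp (Q2 + d2)) ≤
      Real.exp Q1 / (Real.exp Q1 + Real.exp Q2) := by
  rw [add_comm (exp (Q1 + d1)), exp_div_exp_add_exp, exp_div_exp_add_exp]
  exact sigmoid_le (by linarith)

/-- Key intermediate inequality in Lemma 1: under `0 ≤ d2 - d1 ≤ 2 (Q1 - Q2)`, the total
softmax probability of `a2` is at most the extrinsic softmax probability of `a1`. -/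
theorem total_prob_a2_le_ext_prob_a1 (Q1 Q2 d1 d2 : ℝ)
    (h0 : 0 ≤ d2 - d1) (h1 : d2 - d1 ≤ 2 * (Q1 - Q2)) :
    Real.exp (Q2 + d2) / (Real.exp (Q1 + d1) + Real.exp (Q2 + d2)) ≤
      Real.exp Q1 / (Real.exp Q1 + Real.exp Q2) :=
  total_prob_a2_le_ext_prob_a1_general Q1 Q2 d1 d2 h1
end

section
/- Let Q1, Q2 be real numbers with Q1 ≥ Q2, and let d > 0. Then adding the bonus d only to the Q-value of action a1 strictly decreases the entropy of the softmax policy: H( exp(Q1 + d) / (exp(Q1 + d) + exp(Q2)) ) < H( exp(Q1) / (exp(Q1) + exp(Q2)) ), where H(p) = −p·log p − (1−p)·log(1−p). -/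
/-! Since `Q1 ≥ Q2`, the softmax probability of `a1` lies in `[1/2, 1]` both before and after the
bonus, and the bonus strictly increases it; binary entropy is strictly decreasing on `[1/2, 1]`. -/

noncomputable def binEntropy (p : ℝ) : ℝ :=
  -p * Real.log p - (1 - p) * Real.log (1 - p)

lemma binEntropy_eq_real_binEntropy : binEntropy = Real.binEntropy := by
  funext p
  simp only [binEntropy, Real.binEntropy, Real.log_inv]
  ring

section

open Real Set

lemma exp_div_exp_add_exp_strictMono (y : ℝ) :
    StrictMono fun x => exp x / (exp x + exp y) := by
  intro x₁ x₂ hx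
  have hexp : exp x₁ * exp y < exp x₂ * exp y := by gcongr
  rw [div_lt_div_iff₀ (by positivity) (by positivity)]
  linarith

lemma exp_div_exp_add_exp_mem_Icc {x y : ℝ} (h : y ≤ x) :
    exp x / (exp x + exp y) ∈ Icc 2⁻¹ 1 := by
  have hexp : exp y ≤ exp x := exp_le_exp.2 h
  have hpos : 0 < exp x + exp y := by positivity
  constructor
  · rw [le_div_iff₀ hpos]
    linarith
  · rw [div_le_one hpos]
    linarith [exp_pos y]

end

/-- Case II of Theorem 2: adding a positive bonus `d` only to the Q-value of the optimal
action `a1` (with `Q1 ≥ Q2`) strictly decreases the entropy of the softmax policy. -/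
theorem entropy_strict_decrease_of_bonus_on_optimal (Q1 Q2 d : ℝ)
    (hQ : Q1 ≥ Q2) (hd : 0 < d) :
    binEntropy (Real.exp (Q1 + d) / (Real.exp (Q1 + d) + Real.exp Q2)) <
      binEntropy (Real.exp Q1 / (Real.exp Q1 + Real.exp Q2)) := by
  rw [binEntropy_eq_real_binEntropy]
  exact Real.binEntropy_strictAntiOn (exp_div_exp_add_exp_mem_Icc hQ)
    (exp_div_exp_add_exp_mem_Icc (by linarith))
    (exp_div_exp_add_exp_strictMono Q2 (by linarith))
end
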